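/- arXiv:2303.15158 — 2 statements merged into one kernel-verified Lean document; each statement's English description precedes it below -/
import Mathlib

section
/- For the standard normal upper tail function Q, for every t ≥ 0, Q(t) ≥ 2(2π)^{-1/2} exp(-t^2/2) / (t + sqrt(t^2 + 4)). -/
/-!
With φ the standard normal density, s(t) = √(t² + 4) and G(t) = 2φ(t)/(t + s(t)), one computes
G'(t) = -c(t) φ(t) with c(t) = 2(t + 1/s(t))/(t + s(t)), and
1 - c(t) = (s(t) - t)²/(2 s(t) (t + s(t))) ≥ 0.
Hence Q - G is nonincreasing on all of ℝ; since both Q and G tend to 0 at infinity, Q - G ≥ 0.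
-/

open Real

/-- The upper tail function of the standard normal distribution. -/
noncomputable def gaussQ (t : ℝ) : ℝ :=
  ∫ x in Set.Ioi t, Real.exp (-x ^ 2 / 2) / Real.sqrt (2 * Real.pi)

open MeasureTheory Filter Set Topology

section TailIntegral

variable {E : Type*} [NormedAddCommGroup E] [NormedSpace ℝ E] {f : ℝ → E}

theorem tendsto_integral_Ioi_atTop (hf : Integrable f) :
    Tendsto (fun t ↦ ∫ x in Ioi t, f x) atTop (𝓝 0) := by
  have hempty : ⋂ t : ℝ, Ioi t = ∅ :=
    eq_empty_of_forall_notMem fun x hx ↦ lt_irrefl x (mem_iInter.mp hx x)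
  simpa [hempty] using tendsto_setIntegral_of_antitone (fun _ ↦ measurableSet_Ioi)
    (fun _ _ h ↦ Ioi_subset_Ioi h) ⟨0, hf.integrableOn⟩

theorem hasDerivAt_integral_Ioi [CompleteSpace E] (hf : Integrable f) (hcont : Continuous f)
    (t : ℝ) :
    HasDerivAt (fun u ↦ ∫ x in Ioi u, f x) (-f t) t := by
  have hsplit :
      (fun u ↦ ∫ x in Ioi u, f x) = fun u ↦ (∫ x in Ioi t, f x) - ∫ x in t..u, f x := by
    funext u
    exact eq_sub_of_add_eq'
      (intervalIntegral.integral_interval_add_Ioi hf.integrableOn hf.integrableOn)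
  rw [hsplit, ← zero_sub]
  exact (hasDerivAt_const t _).sub <| intervalIntegral.integral_hasDerivAt_right
    hf.intervalIntegrable (hcont.stronglyMeasurableAtFilter _ _) hcont.continuousAt

end TailIntegral

noncomputable def stdNormalPDF (x : ℝ) : ℝ := exp (-x ^ 2 / 2) / √(2 * π)

theorem continuous_stdNormalPDF : Continuous stdNormalPDF := by
  unfold stdNormalPDF; fun_prop

theorem integrable_stdNormalPDF : Integrable stdNormalPDF := by
  have h := (integrable_exp_neg_mul_sq (b := 1 / 2) (by norm_num)).div_const √(2 * π)
  convert h using 3 with x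
  unfold stdNormalPDF
  ring_nf

theorem hasDerivAt_stdNormalPDF (x : ℝ) :
    HasDerivAt stdNormalPDF (-x * stdNormalPDF x) x := by
  have h : HasDerivAt (fun v ↦ exp (-v ^ 2 / 2) / √(2 * π))
      (exp (-x ^ 2 / 2) * (-(2 * x) / 2) / √(2 * π)) x := by
    simpa using ((hasDerivAt_pow 2 x).neg.div_const 2).exp.div_const √(2 * π)
  refine h.congr_deriv ?_
  rw [stdNormalPDF]
  ring

theorem stdNormalPDF_pos (x : ℝ) : 0 < stdNormalPDF x := by
  unfold stdNormalPDF; positivity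

theorem tendsto_stdNormalPDF_atTop : Tendsto stdNormalPDF atTop (𝓝 0) := by
  have h : Tendsto (fun x : ℝ ↦ x ^ 2 / 2) atTop atTop :=
    (tendsto_pow_atTop two_ne_zero).atTop_div_const two_pos
  have h' := (tendsto_exp_neg_atTop_nhds_zero.comp h).div_const √(2 * π)
  simp only [zero_div, Function.comp_def, ← neg_div] at h'
  exact h'

theorem hasDerivAt_gaussQ (t : ℝ) : HasDerivAt gaussQ (-stdNormalPDF t) t :=
  hasDerivAt_integral_Ioi integrable_stdNormalPDF continuous_stdNormalPDF t

theorem tendsto_gaussQ_atTop : Tendsto gaussQ atTop (𝓝 0) :=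
  tendsto_integral_Ioi_atTop integrable_stdNormalPDF

theorem abs_lt_sqrt_sq_add (x : ℝ) {c : ℝ} (hc : 0 < c) : |x| < √(x ^ 2 + c) := by
  rw [Real.lt_sqrt (abs_nonneg x), sq_abs]
  linarith

theorem add_sqrt_sq_add_pos (x : ℝ) {c : ℝ} (hc : 0 < c) : 0 < x + √(x ^ 2 + c) := by
  linarith [neg_abs_le x, abs_lt_sqrt_sq_add x hc]

noncomputable def szarekWerner (t : ℝ) : ℝ := 2 * stdNormalPDF t / (t + √(t ^ 2 + 4))

theorem hasDerivAt_szarekWerner (u : ℝ) :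
    HasDerivAt szarekWerner
      (-(2 * (u + (√(u ^ 2 + 4))⁻¹) / (u + √(u ^ 2 + 4))) * stdNormalPDF u) u := by
  have hr := add_sqrt_sq_add_pos u four_pos
  have hsqrt : HasDerivAt (fun v ↦ √(v ^ 2 + 4)) (u / √(u ^ 2 + 4)) u := by
    convert ((hasDerivAt_pow 2 u).add_const 4).sqrt (by positivity) using 1
    ring
  have h : HasDerivAt (fun v ↦ 2 * stdNormalPDF v / (v + √(v ^ 2 + 4)))
      ((2 * (-u * stdNormalPDF u) * (u + √(u ^ 2 + 4))
        - 2 * stdNormalPDF u * (1 + u / √(u ^ 2 + 4))) / (u + √(u ^ 2 + 4)) ^ 2) u :=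
    ((hasDerivAt_stdNormalPDF u).const_mul 2).div ((hasDerivAt_id' u).add hsqrt) hr.ne'
  refine h.congr_deriv ?_
  field_simp
  ring

theorem szarekWerner_deriv_factor_le_one (u : ℝ) :
    2 * (u + (√(u ^ 2 + 4))⁻¹) / (u + √(u ^ 2 + 4)) ≤ 1 := by
  have hs2 : √(u ^ 2 + 4) ^ 2 = u ^ 2 + 4 := sq_sqrt (by positivity)
  rw [div_le_one (add_sqrt_sq_add_pos u four_pos), ← sub_nonneg]
  have hgap : u + √(u ^ 2 + 4) - 2 * (u + (√(u ^ 2 + 4))⁻¹)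
      = (√(u ^ 2 + 4) - u) ^ 2 / (2 * √(u ^ 2 + 4)) := by
    field_simp
    linear_combination hs2
  rw [hgap]
  positivity

theorem tendsto_szarekWerner_atTop : Tendsto szarekWerner atTop (𝓝 0) := by
  have hr : Tendsto (fun u : ℝ ↦ u + √(u ^ 2 + 4)) atTop atTop :=
    tendsto_atTop_mono (fun u ↦ le_add_of_nonneg_right (sqrt_nonneg _)) tendsto_id
  exact (tendsto_stdNormalPDF_atTop.const_mul 2).div_atTop hr

theorem stmt_3_general (t : ℝ) :
    2 * (Real.sqrt (2 * Real.pi))⁻¹ * Real.exp (-t ^ 2 / 2) / (t + Real.sqrt (t ^ 2 + 4))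
      ≤ gaussQ t := by
  have hanti : Antitone fun u ↦ gaussQ u - szarekWerner u := by
    refine antitone_of_hasDerivAt_nonpos
      (fun u ↦ (hasDerivAt_gaussQ u).sub (hasDerivAt_szarekWerner u)) fun u ↦ ?_
    rw [Pi.zero_apply]
    nlinarith [mul_le_mul_of_nonneg_right (szarekWerner_deriv_factor_le_one u)
      (stdNormalPDF_pos u).le]
  have hlim : Tendsto (fun u ↦ gaussQ u - szarekWerner u) atTop (𝓝 0) := by
    simpa using tendsto_gaussQ_atTop.sub tendsto_szarekWerner_atTop
  have hbound : 2 * (√(2 * π))⁻¹ * exp (-t ^ 2 / 2) / (t + √(t ^ 2 + 4)) = szarekWerner t := by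
    rw [szarekWerner, stdNormalPDF]
    ring
  linarith [hanti.le_of_tendsto hlim t]

/-- Szarek–Werner lower bound on the Gaussian tail. -/
theorem stmt_3 (t : ℝ) (ht : 0 ≤ t) :
    2 * (Real.sqrt (2 * Real.pi))⁻¹ * Real.exp (-t ^ 2 / 2) / (t + Real.sqrt (t ^ 2 + 4))
      ≤ gaussQ t :=
  stmt_3_general t
end

section
/- Let Σ, Σ̂ be symmetric d×d matrices with λ_min(Σ) ≥ γ > 0, and let S ⊆ {1,…,d} with |S| = s. Then for every nonzero δ ∈ ℝ^d in the cone {‖δ_{S^c}‖_1 ≤ 3‖δ_S‖_1}, δᵀ Σ̂ δ / ‖δ‖_2^2 ≥ γ - 16 s ‖Σ̂ - Σ‖_max. -/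
/-!
Write `Σ̂ = Σ + (Σ̂ - Σ)`. The quadratic form of `Σ` is at least `γ ‖δ‖₂²` since `Σ - γ I` is
positive semidefinite, the one of `Σ̂ - Σ` is at most `‖Σ̂ - Σ‖_max ‖δ‖₁²` in absolute value, and
on the cone `‖δ‖₁ ≤ 4 ‖δ_S‖₁ ≤ 4 √s ‖δ‖₂` by Cauchy–Schwarz.
-/

open Finset Matrix
open scoped MatrixOrder

namespace Matrix

variable {m n : Type*}

theorem abs_apply_le_iSup_iSup_abs [Finite m] [Finite n] (M : Matrix m n ℝ) (i : m) (j : n) :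
    |M i j| ≤ ⨆ i, ⨆ j, |M i j| :=
  (le_ciSup (Set.finite_range _).bddAbove j).trans
    (le_ciSup (f := fun i ↦ ⨆ j, |M i j|) (Set.finite_range _).bddAbove i)

theorem abs_dotProduct_mulVec_le [Fintype m] [Fintype n] {M : Matrix m n ℝ} {c : ℝ}
    (hM : ∀ i j, |M i j| ≤ c) (x : m → ℝ) (y : n → ℝ) :
    |x ⬝ᵥ (M *ᵥ y)| ≤ c * (∑ i, |x i|) * ∑ j, |y j| := by
  calc |x ⬝ᵥ (M *ᵥ y)| = |∑ i, ∑ j, x i * M i j * y j| := by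
        simp only [dotProduct, mulVec, Finset.mul_sum, mul_assoc]
    _ ≤ ∑ i, ∑ j, |x i| * c * |y j| := by
        refine (abs_sum_le_sum_abs _ _).trans (sum_le_sum fun i _ ↦ ?_)
        refine (abs_sum_le_sum_abs _ _).trans (sum_le_sum fun j _ ↦ ?_)
        rw [abs_mul, abs_mul]
        gcongr
        exact hM i j
    _ = c * (∑ i, |x i|) * ∑ j, |y j| := by
        rw [mul_assoc, Fintype.sum_mul_sum, Finset.mul_sum]
        refine sum_congr rfl fun i _ ↦ ?_
        rw [Finset.mul_sum]
        exact sum_congr rfl fun j _ ↦ by ring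

variable [Fintype n] [DecidableEq n] {A : Matrix n n ℝ} {γ : ℝ}

theorem IsHermitian.algebraMap_le_of_le_eigenvalues (hA : A.IsHermitian)
    (h : ∀ i, γ ≤ hA.eigenvalues i) : algebraMap ℝ _ γ ≤ A := by
  rw [algebraMap_le_iff_le_spectrum (a := A) hA.isSelfAdjoint,
    hA.spectrum_real_eq_range_eigenvalues]
  rintro _ ⟨i, rfl⟩
  exact h i

theorem IsHermitian.mul_dotProduct_self_le_of_le_eigenvalues (hA : A.IsHermitian)
    (h : ∀ i, γ ≤ hA.eigenvalues i) (x : n → ℝ) : γ * (x ⬝ᵥ x) ≤ x ⬝ᵥ (A *ᵥ x) := by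
  have := (le_iff.mp (hA.algebraMap_le_of_le_eigenvalues h)).dotProduct_mulVec_nonneg x
  simpa [sub_mulVec, Algebra.algebraMap_eq_smul_one, smul_mulVec, dotProduct_smul] using this

end Matrix

theorem sq_sum_abs_le_of_cone {ι : Type*} [Fintype ι] [DecidableEq ι] (S : Finset ι)
    {δ : ι → ℝ} {c : ℝ} (hcone : ∑ j ∈ Sᶜ, |δ j| ≤ c * ∑ j ∈ S, |δ j|) :
    (∑ j, |δ j|) ^ 2 ≤ (1 + c) ^ 2 * #S * ∑ j, δ j ^ 2 := by
  have hsplit : ∑ j, |δ j| ≤ (1 + c) * ∑ j ∈ S, |δ j| := by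
    rw [← sum_add_sum_compl S]
    linarith
  have hS : (∑ j ∈ S, |δ j|) ^ 2 ≤ #S * ∑ j, δ j ^ 2 :=
    calc (∑ j ∈ S, |δ j|) ^ 2 ≤ #S * ∑ j ∈ S, |δ j| ^ 2 := sq_sum_le_card_mul_sum_sq
      _ ≤ #S * ∑ j, δ j ^ 2 := by
        simp only [sq_abs]
        gcongr
        exact subset_univ S
  calc (∑ j, |δ j|) ^ 2 ≤ ((1 + c) * ∑ j ∈ S, |δ j|) ^ 2 := by
        gcongr
    _ ≤ (1 + c) ^ 2 * #S * ∑ j, δ j ^ 2 := by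
        rw [mul_pow, mul_assoc]
        gcongr

theorem stmt_8_general {d : ℕ} (Sig SigHat : Matrix (Fin d) (Fin d) ℝ)
    (hSig : Sig.IsHermitian)
    (γ : ℝ) (hmin : ∀ i, γ ≤ hSig.eigenvalues i)
    (S : Finset (Fin d)) (s : ℕ) (hs : S.card = s)
    (δ : Fin d → ℝ) (hδ : δ ≠ 0)
    (hcone : ∑ j ∈ Sᶜ, |δ j| ≤ 3 * ∑ j ∈ S, |δ j|) :
    γ - 16 * (s : ℝ) * (⨆ i, ⨆ j, |SigHat i j - Sig i j|)
      ≤ (δ ⬝ᵥ (SigHat *ᵥ δ)) / ∑ j, δ j ^ 2 := by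
  set M := ⨆ i, ⨆ j, |SigHat i j - Sig i j|
  have hM : 0 ≤ M := Real.iSup_nonneg fun i ↦ Real.iSup_nonneg fun j ↦ abs_nonneg _
  have hnorm : ∑ j, δ j ^ 2 = δ ⬝ᵥ δ := by simp only [dotProduct, sq]
  have hpos : 0 < δ ⬝ᵥ δ :=
    (sum_nonneg fun j _ ↦ mul_self_nonneg (δ j)).lt_of_ne' (dotProduct_self_eq_zero.not.mpr hδ)
  have hquad : γ * (δ ⬝ᵥ δ) ≤ δ ⬝ᵥ (Sig *ᵥ δ) :=
    hSig.mul_dotProduct_self_le_of_le_eigenvalues hmin δ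
  have herr : |δ ⬝ᵥ ((SigHat - Sig) *ᵥ δ)| ≤ M * (∑ j, |δ j|) * ∑ j, |δ j| :=
    abs_dotProduct_mulVec_le (fun i j ↦ (SigHat - Sig).abs_apply_le_iSup_iSup_abs i j) δ δ
  have hcone_l1 : (∑ j, |δ j|) ^ 2 ≤ 16 * s * (δ ⬝ᵥ δ) := by
    have := sq_sum_abs_le_of_cone S hcone
    rw [hs, hnorm] at this
    linarith
  rw [hnorm, le_div_iff₀ hpos, ← add_sub_cancel Sig SigHat, add_mulVec, dotProduct_add]
  linarith [abs_le.mp herr, mul_le_mul_of_nonneg_left hcone_l1 hM]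

/-- Restricted eigenvalue bound: for `δ` in the cone, the Rayleigh quotient of `Σ̂` is at least
`γ - 16 s ‖Σ̂ - Σ‖_max`, where `λ_min(Σ) ≥ γ > 0`. -/
theorem stmt_8 {d : ℕ} (Sig SigHat : Matrix (Fin d) (Fin d) ℝ)
    (hSig : Sig.IsHermitian) (hSigHat : SigHat.IsHermitian)
    (γ : ℝ) (hγ : 0 < γ) (hmin : ∀ i, γ ≤ hSig.eigenvalues i)
    (S : Finset (Fin d)) (s : ℕ) (hs : S.card = s)
    (δ : Fin d → ℝ) (hδ : δ ≠ 0)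
    (hcone : ∑ j ∈ Sᶜ, |δ j| ≤ 3 * ∑ j ∈ S, |δ j|) :
    γ - 16 * (s : ℝ) * (⨆ i, ⨆ j, |SigHat i j - Sig i j|)
      ≤ (δ ⬝ᵥ (SigHat *ᵥ δ)) / ∑ j, δ j ^ 2 :=
  stmt_8_general Sig SigHat hSig γ hmin S s hs δ hδ hcone
end
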